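/- For n ≥ 3, let Φ(x_1,…,x_n) = f(x_1) + Σ_{0<j<j+k≤n} x_j x_k x_n^{n-j-k} where f : ℝ → ℝ is twice differentiable. Then the Hessian matrix of Φ has rank exactly n-1 at every point of ℝ^n; in particular its kernel is one-dimensional everywhere. -/

import Mathlib

/-!
Index coordinates from `0`, put `n = m + 1` and `t = x_m`, and let `Y_a = Σ_{i ≤ a} x_i t^{a-i}`
be the Horner sums. Every first partial derivative of Φ is a function of `Y_0, …, Y_{m-1}` alone:
`∂_k Φ = [k = 0] f'(Y_0) + 2 Y_{m-1-k}` for `k < m`, and `∂_m Φ = Σ_{a+b=m-2} Y_a Y_b`, because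
the coefficient `m-1-i-j` of `x_i x_j t^{m-2-i-j}` in `∂_m Φ` counts the pairs `i ≤ a`, `j ≤ b`
with `a + b = m - 2`. Hence the Hessian factors through `ℝ^m` and has rank at most `m`.
Its upper-left `m × m` block is anti-triangular with `2` on the anti-diagonal (the `f''` entry sits
at `(0, 0)`, off the anti-diagonal since `m ≥ 2`), so the rank is exactly `m`.
-/

open Finset

/-- Hessian matrix of a function on `ℝⁿ` with respect to the standard basis. -/
noncomputable def hess {n : ℕ} (Φ : (Fin n → ℝ) → ℝ) (x : Fin n → ℝ) :
    Matrix (Fin n) (Fin n) ℝ :=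
  fun j k => fderiv ℝ (fun y => fderiv ℝ Φ y (Pi.single k 1)) x (Pi.single j 1)

theorem fderiv_mul_pow_apply {ι : Type*} [Fintype ι] (a c : ι) (e : ℕ) (y v : ι → ℝ) :
    fderiv ℝ (fun x : ι → ℝ => x a * x c ^ e) y v =
      v a * y c ^ e + y a * (e * y c ^ (e - 1) * v c) := by
  rw [fderiv_fun_mul (by fun_prop) (by fun_prop), fderiv_fun_pow _ (by fun_prop)]
  simp [(hasFDerivAt_apply _ y).fderiv]
  ring

theorem fderiv_mul_mul_pow_apply {ι : Type*} [Fintype ι] (a b c : ι) (e : ℕ) (y v : ι → ℝ) :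
    fderiv ℝ (fun x : ι → ℝ => x a * x b * x c ^ e) y v =
      v a * y b * y c ^ e + y a * v b * y c ^ e + y a * y b * (e * y c ^ (e - 1) * v c) := by
  rw [fderiv_fun_mul (by fun_prop) (by fun_prop), fderiv_fun_mul (by fun_prop) (by fun_prop),
    fderiv_fun_pow _ (by fun_prop)]
  simp [(hasFDerivAt_apply _ y).fderiv]
  ring

theorem fderiv_comp_eval_apply {ι : Type*} [Fintype ι] {g : ℝ → ℝ} (i : ι) {x : ι → ℝ}
    (hg : DifferentiableAt ℝ g (x i)) (v : ι → ℝ) :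
    fderiv ℝ (fun y => g (y i)) x v = deriv g (x i) * v i := by
  have h : HasFDerivAt (fun y : ι → ℝ => g (y i)) (deriv g (x i) • ContinuousLinearMap.proj i) x :=
    hg.hasDerivAt.comp_hasFDerivAt x (hasFDerivAt_apply (𝕜 := ℝ) (F' := fun _ => ℝ) i x)
  simp [h.fderiv]

theorem rank_hess_le_of_fderiv_factors {n : ℕ} {ι : Type*} [Fintype ι] [DecidableEq ι]
    {Φ : (Fin n → ℝ) → ℝ} {x : Fin n → ℝ} {Y : (Fin n → ℝ) → ι → ℝ}
    (hY : DifferentiableAt ℝ Y x)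
    (hΦ : ∀ k, ∃ F : (ι → ℝ) → ℝ, DifferentiableAt ℝ F (Y x) ∧
      (fun y => fderiv ℝ Φ y (Pi.single k 1)) = F ∘ Y) :
    (hess Φ x).rank ≤ Fintype.card ι := by
  choose F hF hΦ using hΦ
  have hmul : hess Φ x = Matrix.of (fun j a => fderiv ℝ Y x (Pi.single j 1) a) *
      Matrix.of (fun a k => fderiv ℝ (F k) (Y x) (Pi.single a 1)) := by
    ext j k
    rw [hess, hΦ k, fderiv_comp x (hF k) hY, ContinuousLinearMap.comp_apply]
    conv_lhs => rw [← univ_sum_single (fderiv ℝ Y x (Pi.single j 1))]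
    simp only [map_sum, Matrix.mul_apply, Matrix.of_apply]
    refine sum_congr rfl fun a _ => ?_
    rw [← smul_eq_mul, ← map_smul, ← Pi.single_smul', smul_eq_mul, mul_one]
  rw [hmul]
  exact (Matrix.rank_mul_le_left _ _).trans (Matrix.rank_le_card_width _)

theorem card_filter_add_add_two_eq (m i j : ℕ) :
    #{p : Fin m × Fin m | p.1.val + p.2.val + 2 = m ∧ i ≤ p.1 ∧ j ≤ p.2} = m - 1 - i - j := by
  have hIco : {a ∈ range m | i ≤ a ∧ a + j + 2 ≤ m} = Ico i (m - 1 - j) := by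
    ext; simp; omega
  rw [show m - 1 - i - j = #{a ∈ range m | i ≤ a ∧ a + j + 2 ≤ m} by rw [hIco, Nat.card_Ico]; omega,
    card_filter, card_filter, Fintype.sum_prod_type]
  dsimp only
  rw [Fin.sum_univ_eq_sum_range
    (fun a => ∑ b : Fin m, if a + b + 2 = m ∧ i ≤ a ∧ j ≤ b then 1 else 0)]
  refine sum_congr rfl fun a ha => ?_
  rw [Fin.sum_univ_eq_sum_range (fun b => if a + b + 2 = m ∧ i ≤ a ∧ j ≤ b then 1 else 0),
    sum_congr rfl fun b _ => if_congr (show a + b + 2 = m ∧ i ≤ a ∧ j ≤ b ↔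
      m - 2 - a = b ∧ (i ≤ a ∧ a + j + 2 ≤ m) by omega) rfl rfl]
  simp only [ite_and, sum_ite_eq, mem_range]
  rw [if_pos (by simp at ha; omega)]

variable {m : ℕ} {f : ℝ → ℝ}

noncomputable def hornerSum (x : Fin (m + 1) → ℝ) (a : ℕ) : ℝ :=
  ∑ i : Fin (m + 1) with i.val ≤ a, x i * x (Fin.last m) ^ (a - i)

theorem hornerSum_zero (y : Fin (m + 1) → ℝ) : hornerSum y 0 = y 0 := by
  simp [hornerSum, Fin.val_eq_zero_iff, filter_eq']

theorem fderiv_hornerSum_single (x : Fin (m + 1) → ℝ) (a : ℕ) (j : Fin m) :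
    fderiv ℝ (fun y => hornerSum y a) x (Pi.single j.castSucc 1) =
      if (j : ℕ) ≤ a then x (Fin.last m) ^ (a - j) else 0 := by
  unfold hornerSum
  rw [fderiv_fun_sum (fun i _ => by fun_prop)]
  simp [fderiv_mul_pow_apply, Pi.single_apply, Fin.castSucc_ne_last]

theorem sum_hornerSum_mul_hornerSum (y : Fin (m + 1) → ℝ) :
    ∑ a : Fin m, ∑ b : Fin m with a.val + b.val + 2 = m, hornerSum y a * hornerSum y b =
      ∑ i : Fin (m + 1), ∑ j : Fin (m + 1),
        ((m - 1 - i - j : ℕ) : ℝ) * (y i * y j * y (Fin.last m) ^ (m - 2 - i - j)) := by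
  have hterm : ∀ a b : Fin m,
      (if (a : ℕ) + b + 2 = m then hornerSum y a * hornerSum y b else 0) =
        ∑ i : Fin (m + 1), ∑ j : Fin (m + 1),
          if (a : ℕ) + b + 2 = m ∧ (i : ℕ) ≤ a ∧ (j : ℕ) ≤ b then
            y i * y j * y (Fin.last m) ^ (m - 2 - i - j) else 0 := by
    intro a b
    split_ifs with hab
    · rw [hornerSum, hornerSum, sum_filter, sum_filter, sum_mul_sum]
      refine sum_congr rfl fun i _ => sum_congr rfl fun j _ => ?_
      split_ifs <;> first | omega | simp_all
      rw [show m - 2 - i - j = (a - i) + (b - j) by omega, pow_add]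
      ring
    · simp [hab]
  simp only [sum_filter, hterm]
  rw [sum_congr rfl fun a _ => sum_comm, sum_comm]
  refine sum_congr rfl fun i _ => ?_
  rw [sum_congr rfl fun a _ => sum_comm, sum_comm]
  refine sum_congr rfl fun j _ => ?_
  rw [← Fintype.sum_prod_type' (f := fun (a b : Fin m) =>
      if (a : ℕ) + b + 2 = m ∧ (i : ℕ) ≤ a ∧ (j : ℕ) ≤ b then
        y i * y j * y (Fin.last m) ^ (m - 2 - i - j) else 0),
    ← sum_filter, sum_const, card_filter_add_add_two_eq, nsmul_eq_mul]

noncomputable def phi (m : ℕ) (f : ℝ → ℝ) (x : Fin (m + 1) → ℝ) : ℝ :=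
  f (x 0) + ∑ j : Fin (m + 1), ∑ k : Fin (m + 1),
    if (j : ℕ) + k + 1 ≤ m then x j * x k * x (Fin.last m) ^ (m - 1 - j - k) else 0

theorem fderiv_phi_apply (hf : Differentiable ℝ f) (y v : Fin (m + 1) → ℝ) :
    fderiv ℝ (phi m f) y v = deriv f (y 0) * v 0 + ∑ j : Fin (m + 1), ∑ k : Fin (m + 1),
      if (j : ℕ) + k + 1 ≤ m then
        fderiv ℝ (fun x : Fin (m + 1) → ℝ => x j * x k * x (Fin.last m) ^ (m - 1 - j - k)) y v
      else 0 := by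
  have hmon : ∀ j k : Fin (m + 1), DifferentiableAt ℝ (fun x : Fin (m + 1) → ℝ =>
      if (j : ℕ) + k + 1 ≤ m then x j * x k * x (Fin.last m) ^ (m - 1 - j - k) else 0) y := by
    intro j k; split_ifs <;> fun_prop
  unfold phi
  rw [fderiv_fun_add (by fun_prop) (by fun_prop), fderiv_fun_sum (fun j _ => by fun_prop)]
  simp only [add_apply, FunLike.coe_sum, Finset.sum_apply]
  congr 1
  · exact fderiv_comp_eval_apply 0 (hf _) v
  · refine sum_congr rfl fun j _ => ?_
    rw [fderiv_fun_sum (fun k _ => hmon j k)]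
    simp only [FunLike.coe_sum, Finset.sum_apply]
    refine sum_congr rfl fun k _ => ?_
    split_ifs <;> simp

theorem fderiv_phi_single_castSucc (hf : Differentiable ℝ f) (y : Fin (m + 1) → ℝ) (k : Fin m) :
    fderiv ℝ (phi m f) y (Pi.single k.castSucc 1) =
      (if (k : ℕ) = 0 then deriv f (y 0) else 0) + 2 * hornerSum y k.rev := by
  have hsplit : ∀ j l : Fin (m + 1), (if (j : ℕ) + l + 1 ≤ m then
      fderiv ℝ (fun x : Fin (m + 1) → ℝ => x j * x l * x (Fin.last m) ^ (m - 1 - j - l)) y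
        (Pi.single k.castSucc 1) else 0) =
      (if j = k.castSucc ∧ (k : ℕ) + l + 1 ≤ m then y l * y (Fin.last m) ^ (m - 1 - k - l)
        else 0) +
      (if l = k.castSucc ∧ (j : ℕ) + k + 1 ≤ m then y j * y (Fin.last m) ^ (m - 1 - j - k)
        else 0) := by
    intro j l
    rw [fderiv_mul_mul_pow_apply]
    simp only [Pi.single_apply, (Fin.castSucc_ne_last k).symm, if_false, mul_zero, add_zero]
    by_cases hj : j = k.castSucc <;> by_cases hl : l = k.castSucc <;> subst_vars <;>
      split_ifs <;> simp_all <;> omega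
  simp only [fderiv_phi_apply hf, hsplit, ite_and, sum_add_distrib, sum_ite_eq', mem_univ,
    if_true]
  rw [sum_comm]
  simp only [sum_ite_eq', mem_univ, if_true, hornerSum, sum_filter, Fin.val_rev]
  congr 1
  · simp [Pi.single_apply, Fin.ext_iff, eq_comm]
  · rw [two_mul]
    congr 1 <;> refine sum_congr rfl fun i _ => if_congr (by omega) (by congr 2; omega) rfl

theorem fderiv_phi_single_last (hf : Differentiable ℝ f) (hm : m ≠ 0) (y : Fin (m + 1) → ℝ) :
    fderiv ℝ (phi m f) y (Pi.single (Fin.last m) 1) =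
      ∑ a : Fin m, ∑ b : Fin m with a.val + b.val + 2 = m, hornerSum y a * hornerSum y b := by
  have h0 : (0 : Fin (m + 1)) ≠ Fin.last m := by simp [Fin.ext_iff, Ne.symm hm]
  rw [sum_hornerSum_mul_hornerSum, fderiv_phi_apply hf]
  simp only [Pi.single_apply, if_neg h0, mul_zero, zero_add]
  refine sum_congr rfl fun j _ => sum_congr rfl fun k _ => ?_
  split_ifs with h
  · have hj : j ≠ Fin.last m := fun h' => by simp [h'] at h
    have hk : k ≠ Fin.last m := fun h' => by simp [h'] at h
    rw [fderiv_mul_mul_pow_apply]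
    simp only [Pi.single_apply, if_neg hj, if_neg hk, if_true]
    rw [show m - 1 - j - k - 1 = m - 2 - j - k by omega]
    ring
  · rw [show m - 1 - j - k = 0 by omega]
    simp

theorem exists_fderiv_phi_eq_comp_hornerSum (hf : ContDiff ℝ 2 f) (hm : m ≠ 0) (k : Fin (m + 1)) :
    ∃ F : (Fin m → ℝ) → ℝ, Differentiable ℝ F ∧
      (fun y => fderiv ℝ (phi m f) y (Pi.single k 1)) = F ∘ fun y (a : Fin m) => hornerSum y a := by
  have hf1 : Differentiable ℝ f := hf.differentiable (by norm_num)
  induction k using Fin.lastCases with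
  | last =>
    exact ⟨fun w => ∑ a : Fin m, ∑ b : Fin m with a.val + b.val + 2 = m, w a * w b, by fun_prop,
      funext fun y => fderiv_phi_single_last hf1 hm y⟩
  | cast c =>
    refine ⟨fun w => (if (c : ℕ) = 0 then deriv f (w ⟨0, c.pos⟩) else 0) + 2 * w c.rev,
      Differentiable.add ?_ (by fun_prop), funext fun y => ?_⟩
    · have := hf.differentiable_deriv_two
      split_ifs <;> fun_prop
    · simp only [fderiv_phi_single_castSucc hf1, Function.comp_apply]
      rw [hornerSum_zero]

theorem rank_hess_phi_le (hf : ContDiff ℝ 2 f) (hm : m ≠ 0) (x : Fin (m + 1) → ℝ) :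
    (hess (phi m f) x).rank ≤ m := by
  simpa using rank_hess_le_of_fderiv_factors (by unfold hornerSum; fun_prop)
    fun k => (exists_fderiv_phi_eq_comp_hornerSum hf hm k).imp fun F hF => ⟨hF.1 _, hF.2⟩

theorem hess_phi_castSucc (hf : ContDiff ℝ 2 f) (x : Fin (m + 1) → ℝ) (j k : Fin m) :
    hess (phi m f) x j.castSucc k.castSucc =
      (if (j : ℕ) = 0 ∧ (k : ℕ) = 0 then deriv (deriv f) (x 0) else 0) +
        2 * (if (j : ℕ) ≤ k.rev then x (Fin.last m) ^ (k.rev - j : ℕ) else 0) := by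
  have hfirst : DifferentiableAt ℝ (fun y : Fin (m + 1) → ℝ =>
      if (k : ℕ) = 0 then deriv f (y 0) else 0) x := by
    split_ifs <;> fun_prop
  simp only [hess, fderiv_phi_single_castSucc (hf.differentiable (by norm_num))]
  rw [fderiv_fun_add hfirst (by unfold hornerSum; fun_prop), add_apply,
    fderiv_const_mul (a := fun y => hornerSum y k.rev) (by unfold hornerSum; fun_prop),
    smul_apply, fderiv_hornerSum_single, smul_eq_mul]
  congr 1
  by_cases hk : (k : ℕ) = 0
  · simp only [hk, if_true, and_true, fderiv_comp_eval_apply _ (hf.differentiable_deriv_two _),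
      Pi.single_apply, Fin.ext_iff, Fin.val_castSucc, Fin.val_zero, mul_ite, mul_one, mul_zero,
      eq_comm]
  · simp [hk]

theorem le_rank_hess_phi (hf : ContDiff ℝ 2 f) (hm : 2 ≤ m) (x : Fin (m + 1) → ℝ) :
    m ≤ (hess (phi m f) x).rank := by
  set B := (hess (phi m f) x).submatrix (fun a : Fin m => a.rev.castSucc) Fin.castSucc
  have hB : ∀ a b, B a b = (if (a.rev : ℕ) = 0 ∧ (b : ℕ) = 0 then deriv (deriv f) (x 0) else 0) +
      2 * (if b ≤ a then x (Fin.last m) ^ (b.rev - a.rev : ℕ) else 0) := by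
    intro a b
    simp only [B, Matrix.submatrix_apply, hess_phi_castSucc hf, Fin.val_fin_le, Fin.rev_le_rev]
  have hlower : B.IsLowerTriangular := by
    intro a b (hab : a < b)
    rw [hB, if_neg (by simp only [Fin.val_rev]; omega), if_neg (not_le.2 hab)]
    simp
  have hdiag : ∀ a, B a a = 2 := by
    intro a
    rw [hB, if_neg (by simp only [Fin.val_rev]; omega), if_pos le_rfl]
    simp
  have hdet : B.det ≠ 0 := by
    simp [Matrix.det_of_isLowerTriangular B hlower, hdiag]
  calc m = B.rank := by
        rw [Matrix.rank_of_isUnit B ((Matrix.isUnit_iff_isUnit_det B).2 hdet.isUnit),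
          Fintype.card_fin]
    _ ≤ (hess (phi m f) x).rank := Matrix.rank_submatrix_le _ _ _

/-- Indices are 0-based: coordinate `i : Fin n` is `x_{i+1}`. -/
theorem hessian_rank_eq (n : ℕ) (hn : 3 ≤ n) (f : ℝ → ℝ) (hf : ContDiff ℝ 2 f)
    (Φ : (Fin n → ℝ) → ℝ)
    (hΦ : Φ = fun x => f (x ⟨0, by omega⟩) + ∑ j : Fin n, ∑ k : Fin n,
      if (j : ℕ) + (k : ℕ) + 2 ≤ n then
        x j * x k * (x ⟨n - 1, by omega⟩) ^ (n - 2 - (j : ℕ) - (k : ℕ)) else 0) :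
    ∀ x : Fin n → ℝ, (hess Φ x).rank = n - 1 ∧
      Module.finrank ℝ (LinearMap.ker (hess Φ x).mulVecLin) = 1 := by
  obtain ⟨m, rfl⟩ : ∃ m, n = m + 1 := ⟨n - 1, by omega⟩
  have hphi : Φ = phi m f := by
    subst hΦ
    funext x
    have hlast : (⟨m + 1 - 1, by omega⟩ : Fin (m + 1)) = Fin.last m := Fin.ext (by simp)
    simp only [phi, hlast]
    congr 1
    refine sum_congr rfl fun j _ => sum_congr rfl fun k _ => if_congr (by omega) ?_ rfl
    rw [show m + 1 - 2 - j - k = m - 1 - j - k by omega]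
  intro x
  have hrank : (hess Φ x).rank = m := hphi ▸
    le_antisymm (rank_hess_phi_le hf (by omega) x) (le_rank_hess_phi hf (by omega) x)
  refine ⟨by rw [hrank, Nat.add_sub_cancel], ?_⟩
  have := LinearMap.finrank_range_add_finrank_ker (hess Φ x).mulVecLin
  rw [← Matrix.rank, hrank, Module.finrank_fin_fun] at this
  omega
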